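/- arXiv:2209.12112 — 3 statements merged into one kernel-verified Lean document; each statement's English description precedes it below -/
import Mathlib

section
/- Let G = G^1 ⊗ … ⊗ G^n and F = F^1 ⊗ … ⊗ F^n be product probability distributions on [0, x̄]^n with continuous marginal CDFs, and suppose sup_x |F^i(x) − G^i(x)| ≤ Δ for every i. Let p* ∈ ℝ^n satisfy p*_i > 0 for all i and Σ_i p*_i = 1, and suppose λ, λ* ∈ ℝ^n satisfy p_j(G, λ) = p*_j for all j and p_j(F, λ*) = p*_j for all j. Then for every agent i, | E_{X∼F}[ X_i · 1{X ∈ L_i(λ)} ] − E_{X∼F}[ X_i · 1{X ∈ L_i(λ*)} ] | ≤ n Δ x̄. -/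
open MeasureTheory ProbabilityTheory Real

noncomputable section

/-- CDF of a measure on `ℝ`. -/
def mcdf (μ : Measure ℝ) (x : ℝ) : ℝ := (μ (Set.Iic x)).toReal

/-- The Laguerre cell `L_i(λ) = {x ∈ [0,x̄]^n : x_i + λ_i > x_j + λ_j ∀ j ≠ i}`. -/
def laguerre {n : ℕ} (xbar : ℝ) (lam : Fin n → ℝ) (i : Fin n) : Set (Fin n → ℝ) :=
  {x | (∀ j, x j ∈ Set.Icc (0 : ℝ) xbar) ∧ ∀ j, j ≠ i → x j + lam j < x i + lam i}

/-- `p_j(𝐅, λ) = P_{X∼𝐅}(X ∈ L_j(λ))`, the fraction allocated to `j` under the greedy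
allocation policy with parameter `λ`. -/
def pAlloc {n : ℕ} (xbar : ℝ) (μ : Measure (Fin n → ℝ)) (lam : Fin n → ℝ) (j : Fin n) : ℝ :=
  (μ (laguerre xbar lam j)).toReal

/-!
Write `A = L_i(λ)` and `B = L_i(λ*)`. As `0 ≤ x_i ≤ x̄` on the cells, the two utilities differ by
at most `x̄ · max (F(A \ B), F(B \ A))`, so it suffices to bound `F(A \ B)` by `nΔ` (the other
difference is symmetric). Let `H` be the set of agents `j` with `λ_j - λ*_j ≥ λ_i - λ*_i`, and
`V(μ)` the set of values at which the greedy winner under the policy `μ` lies in `H`. Then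
`V(λ*) ⊆ V(λ)`, and up to ties (null, the marginals being atomless) `A \ B ⊆ V(λ) \ V(λ*)`.
Now `V(μ)` is increasing in the coordinates in `H` and decreasing in the others, so its
one-dimensional sections are half-lines, whose probabilities under `Fʲ` and `Gʲ` differ by at most
`Δ`; swapping the marginals one coordinate at a time gives `F(V(λ)) ≤ G(V(λ)) + nΔ`. Hence
`F(A \ B) ≤ F(V(λ)) - F(V(λ*)) ≤ G(V(λ)) + nΔ - F(V(λ*)) = ∑_{j ∈ H} p*_j + nΔ - ∑_{j ∈ H} p*_j`.
-/

open Set Function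

lemma nullSingletonClass_of_continuous_mcdf {ν : Measure ℝ} [IsProbabilityMeasure ν]
    (h : Continuous (mcdf ν)) : NullSingletonClass ν := by
  have hcdf : mcdf ν = cdf ν := funext fun x => (cdf_eq_real ν x).symm
  refine ⟨fun c => ?_⟩
  rw [hcdf] at h
  rw [← measure_cdf ν, StieltjesFunction.measure_singleton,
    h.continuousAt.continuousWithinAt.leftLim_eq, sub_self, ENNReal.ofReal_zero]

section UpperSet

variable {ν ν' : Measure ℝ} [IsProbabilityMeasure ν] [IsProbabilityMeasure ν'] {Δ : ℝ}

lemma measureReal_Ioi_eq_one_sub_mcdf (c : ℝ) : ν.real (Ioi c) = 1 - mcdf ν c := by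
  rw [← compl_Iic, measureReal_compl measurableSet_Iic, probReal_univ]
  rfl

lemma measureReal_le_add_of_isUpperSet [NullSingletonClass ν]
    (hc : ∀ x, |mcdf ν x - mcdf ν' x| ≤ Δ) {S : Set ℝ} (hS : IsUpperSet S) :
    ν.real S ≤ ν'.real S + Δ := by
  have hΔ : 0 ≤ Δ := (abs_nonneg _).trans (hc 0)
  rcases S.eq_empty_or_nonempty with rfl | hne
  · simpa using hΔ
  by_cases hbdd : BddBelow S
  · set c := sInf S
    have hS_sub : S ⊆ Ici c := fun t ht => csInf_le hbdd ht
    have hIoi_sub : Ioi c ⊆ S := fun t ht => by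
      obtain ⟨s, hs, hst⟩ := exists_lt_of_csInf_lt hne ht
      exact hS hst.le hs
    have hν : ν.real S ≤ 1 - mcdf ν c := by
      rw [← measureReal_Ioi_eq_one_sub_mcdf, measureReal_congr Ioi_ae_eq_Ici]
      exact measureReal_mono hS_sub
    have hν' : 1 - mcdf ν' c ≤ ν'.real S := by
      rw [← measureReal_Ioi_eq_one_sub_mcdf]
      exact measureReal_mono hIoi_sub
    linarith [(abs_le.mp (hc c)).1]
  · have : S = univ := eq_univ_of_forall fun t => by
      obtain ⟨s, hs, hst⟩ := not_bddBelow_iff.mp hbdd t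
      exact hS hst.le hs
    simpa [this] using hΔ

lemma measureReal_le_add_of_isLowerSet [NullSingletonClass ν']
    (hc : ∀ x, |mcdf ν x - mcdf ν' x| ≤ Δ) {S : Set ℝ} (hS : IsLowerSet S) :
    ν.real S ≤ ν'.real S + Δ := by
  have hS_meas : MeasurableSet S := hS.ordConnected.measurableSet
  have hcompl := measureReal_le_add_of_isUpperSet (fun x => abs_sub_comm (mcdf ν x) _ ▸ hc x)
    hS.compl
  rw [measureReal_compl hS_meas, measureReal_compl hS_meas, probReal_univ, probReal_univ]
    at hcompl
  linarith

end UpperSet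

lemma setIntegral_sub_setIntegral_le {α : Type*} [MeasurableSpace α] {μ : Measure α}
    [IsFiniteMeasure μ] {f : α → ℝ} {A B : Set α} {c : ℝ} (hA : MeasurableSet A)
    (hB : MeasurableSet B) (hfA : IntegrableOn f A μ) (hfB : IntegrableOn f B μ)
    (hf_le : ∀ x ∈ A, f x ≤ c) (hf_nonneg : ∀ x ∈ B, 0 ≤ f x) :
    (∫ x in A, f x ∂μ) - ∫ x in B, f x ∂μ ≤ c * μ.real (A \ B) := by
  have h_inter : ∫ x in A ∩ B, f x ∂μ ≤ ∫ x in B, f x ∂μ :=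
    setIntegral_mono_set hfB ((ae_restrict_iff' hB).mpr (ae_of_all _ hf_nonneg))
      (Filter.Eventually.of_forall inter_subset_right)
  have h_sdiff : ∫ x in A \ B, f x ∂μ ≤ c * μ.real (A \ B) := by
    rw [mul_comm, ← smul_eq_mul, ← setIntegral_const]
    exact setIntegral_mono_on (hfA.mono_set sdiff_subset) (integrableOn_const (measure_ne_top _ _))
      (hA.diff hB) fun x hx => hf_le x hx.1
  linarith [integral_inter_add_sdiff hB hfA]

section Product

variable {m : ℕ}

lemma Measure.pi_apply_eq_lintegral_fiber {α : Type*} [MeasurableSpace α]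
    (ν : Fin (m + 1) → Measure α) [∀ j, SigmaFinite (ν j)] (k : Fin (m + 1))
    {U : Set (Fin (m + 1) → α)} (hU : MeasurableSet U) :
    Measure.pi ν U =
      ∫⁻ y, ν k {t | k.insertNth t y ∈ U} ∂Measure.pi fun j => ν (k.succAbove j) := by
  set e := MeasurableEquiv.piFinSuccAbove (fun _ : Fin (m + 1) => α) k
  have hV : MeasurableSet (e.symm ⁻¹' U) := e.symm.measurable hU
  have hU_eq : U = e ⁻¹' (e.symm ⁻¹' U) := by ext x; simp
  nth_rw 1 [hU_eq]
  rw [← Measure.map_apply e.measurable hV, (measurePreserving_piFinSuccAbove ν k).map_eq,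
    Measure.prod_apply_symm hV]
  rfl

lemma Measure.pi_le_pi_add_of_fiber_le {α : Type*} [MeasurableSpace α]
    {ν₁ ν₂ : Fin (m + 1) → Measure α} [∀ j, IsProbabilityMeasure (ν₁ j)]
    [∀ j, IsProbabilityMeasure (ν₂ j)] {k : Fin (m + 1)} (h_eq : ∀ j ≠ k, ν₁ j = ν₂ j)
    {U : Set (Fin (m + 1) → α)} (hU : MeasurableSet U) {ε : ENNReal}
    (h_fiber : ∀ y, ν₁ k {t | k.insertNth t y ∈ U} ≤ ν₂ k {t | k.insertNth t y ∈ U} + ε) :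
    Measure.pi ν₁ U ≤ Measure.pi ν₂ U + ε := by
  have h_rest : (fun j => ν₁ (k.succAbove j)) = fun j => ν₂ (k.succAbove j) :=
    funext fun j => h_eq _ (k.succAbove_ne j)
  rw [Measure.pi_apply_eq_lintegral_fiber ν₁ k hU, Measure.pi_apply_eq_lintegral_fiber ν₂ k hU,
    h_rest]
  calc _ ≤ ∫⁻ y, (ν₂ k {t | k.insertNth t y ∈ U} + ε) ∂Measure.pi fun j => ν₂ (k.succAbove j) :=
        lintegral_mono h_fiber
    _ = _ := by rw [lintegral_add_right _ measurable_const, lintegral_const, measure_univ, mul_one]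

end Product

def IsSignedUpperSet {ι : Type*} (H : Finset ι) (U : Set (ι → ℝ)) : Prop :=
  ∀ ⦃x y : ι → ℝ⦄, (∀ j ∈ H, x j ≤ y j) → (∀ j ∉ H, y j ≤ x j) → x ∈ U → y ∈ U

namespace IsSignedUpperSet

variable {m : ℕ} {H : Finset (Fin (m + 1))} {U : Set (Fin (m + 1) → ℝ)} {k : Fin (m + 1)}

lemma isUpperSet_fiber (hU : IsSignedUpperSet H U) (hk : k ∈ H) (y : Fin m → ℝ) :
    IsUpperSet {t | k.insertNth t y ∈ U} := by
  intro t t' htt' ht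
  refine hU ?_ ?_ ht <;> intro j hj
  · rcases k.eq_self_or_eq_succAbove j with rfl | ⟨j, rfl⟩ <;> simp [htt']
  · rcases k.eq_self_or_eq_succAbove j with rfl | ⟨j, rfl⟩
    · exact absurd hk hj
    · simp

lemma isLowerSet_fiber (hU : IsSignedUpperSet H U) (hk : k ∉ H) (y : Fin m → ℝ) :
    IsLowerSet {t | k.insertNth t y ∈ U} := by
  intro t' t htt' ht'
  refine hU ?_ ?_ ht' <;> intro j hj
  · rcases k.eq_self_or_eq_succAbove j with rfl | ⟨j, rfl⟩
    · exact absurd hj hk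
    · simp
  · rcases k.eq_self_or_eq_succAbove j with rfl | ⟨j, rfl⟩ <;> simp [htt']

end IsSignedUpperSet

lemma measure_le_add_of_mcdf_close {ν ν' : Measure ℝ} [IsProbabilityMeasure ν]
    [IsProbabilityMeasure ν'] [NullSingletonClass ν] [NullSingletonClass ν'] {Δ : ℝ}
    (hc : ∀ x, |mcdf ν x - mcdf ν' x| ≤ Δ) {S : Set ℝ} (hS : IsUpperSet S ∨ IsLowerSet S) :
    ν S ≤ ν' S + ENNReal.ofReal Δ := by
  have h_real : ν.real S ≤ ν'.real S + Δ :=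
    hS.elim (measureReal_le_add_of_isUpperSet hc) (measureReal_le_add_of_isLowerSet hc)
  rw [← ofReal_measureReal (measure_ne_top ν S), ← ofReal_measureReal (measure_ne_top ν' S)]
  exact (ENNReal.ofReal_le_ofReal h_real).trans ENNReal.ofReal_add_le

lemma Measure.pi_le_pi_add_of_mcdf_close {m : ℕ} {F G : Fin (m + 1) → Measure ℝ}
    [∀ j, IsProbabilityMeasure (F j)] [∀ j, IsProbabilityMeasure (G j)]
    [∀ j, NullSingletonClass (F j)] [∀ j, NullSingletonClass (G j)] {Δ : ℝ}
    (hc : ∀ j x, |mcdf (F j) x - mcdf (G j) x| ≤ Δ) {H : Finset (Fin (m + 1))}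
    {U : Set (Fin (m + 1) → ℝ)} (hU_meas : MeasurableSet U) (hU : IsSignedUpperSet H U) :
    Measure.pi F U ≤ Measure.pi G U + (m + 1 : ℕ) * ENNReal.ofReal Δ := by
  let hybrid (r : ℕ) (j : Fin (m + 1)) : Measure ℝ := if (j : ℕ) < r then F j else G j
  have : ∀ r j, IsProbabilityMeasure (hybrid r j) := fun r j => by
    unfold hybrid; split <;> infer_instance
  have h_step : ∀ r : ℕ, r < m + 1 →
      Measure.pi (hybrid (r + 1)) U ≤ Measure.pi (hybrid r) U + ENNReal.ofReal Δ := by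
    intro r hr
    have h_new : hybrid (r + 1) ⟨r, hr⟩ = F ⟨r, hr⟩ := by simp [hybrid]
    have h_old : hybrid r ⟨r, hr⟩ = G ⟨r, hr⟩ := by simp [hybrid]
    refine Measure.pi_le_pi_add_of_fiber_le (k := ⟨r, hr⟩) (fun j hj => ?_) hU_meas fun y => ?_
    · have : (j : ℕ) ≠ r := fun h => hj (Fin.ext h)
      simp only [hybrid]
      congr 1
      exact propext (by omega)
    · rw [h_new, h_old]
      by_cases hk : ⟨r, hr⟩ ∈ H
      · exact measure_le_add_of_mcdf_close (hc _) (.inl (hU.isUpperSet_fiber hk y))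
      · exact measure_le_add_of_mcdf_close (hc _) (.inr (hU.isLowerSet_fiber hk y))
  have h_ind : ∀ r ≤ m + 1,
      Measure.pi (hybrid r) U ≤ Measure.pi G U + r * ENNReal.ofReal Δ := by
    intro r
    induction r with
    | zero => intro; simp [hybrid]
    | succ r ih =>
      intro hr
      calc Measure.pi (hybrid (r + 1)) U ≤ Measure.pi (hybrid r) U + ENNReal.ofReal Δ :=
            h_step r hr
        _ ≤ Measure.pi G U + r * ENNReal.ofReal Δ + ENNReal.ofReal Δ := by
            gcongr; exact ih (by omega)
        _ = Measure.pi G U + (r + 1 : ℕ) * ENNReal.ofReal Δ := by push_cast; ring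
  have h_last : hybrid (m + 1) = F := funext fun j => if_pos j.isLt
  simpa only [h_last] using h_ind (m + 1) le_rfl

lemma Measure.pi_real_le_add_of_mcdf_close {m : ℕ} {F G : Fin (m + 1) → Measure ℝ}
    [∀ j, IsProbabilityMeasure (F j)] [∀ j, IsProbabilityMeasure (G j)]
    [∀ j, NullSingletonClass (F j)] [∀ j, NullSingletonClass (G j)] {Δ : ℝ}
    (hc : ∀ j x, |mcdf (F j) x - mcdf (G j) x| ≤ Δ) {H : Finset (Fin (m + 1))}
    {U : Set (Fin (m + 1) → ℝ)} (hU_meas : MeasurableSet U) (hU : IsSignedUpperSet H U) :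
    (Measure.pi F).real U ≤ (Measure.pi G).real U + (m + 1 : ℕ) * Δ := by
  have hΔ : 0 ≤ Δ := (abs_nonneg _).trans (hc 0 0)
  have h := ENNReal.toReal_mono (by finiteness) (Measure.pi_le_pi_add_of_mcdf_close hc hU_meas hU)
  rwa [ENNReal.toReal_add (measure_ne_top _ _) (by finiteness), ENNReal.toReal_mul,
    ENNReal.toReal_ofReal hΔ, ENNReal.toReal_natCast] at h

section Laguerre

variable {n : ℕ} {xbar : ℝ} {lam : Fin n → ℝ}

/-- The values at which the greedy winner lies in `H`, ties within `H` included. -/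
def greedyWinnerIn (lam : Fin n → ℝ) (H : Finset (Fin n)) : Set (Fin n → ℝ) :=
  {x | ∀ j ∉ H, ∃ j' ∈ H, x j + lam j < x j' + lam j'}

def tieSet (lam : Fin n → ℝ) : Set (Fin n → ℝ) :=
  ⋃ (j) (k) (_ : j ≠ k), {x | x j + lam j = x k + lam k}

lemma measurableSet_laguerre (xbar : ℝ) (lam : Fin n → ℝ) (i : Fin n) :
    MeasurableSet (laguerre xbar lam i) := by
  simp only [laguerre, ofPred_and, ofPred_forall]
  measurability

lemma measurableSet_greedyWinnerIn (lam : Fin n → ℝ) (H : Finset (Fin n)) :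
    MeasurableSet (greedyWinnerIn lam H) := by
  simp only [greedyWinnerIn, ofPred_forall, ofPred_exists]
  measurability

lemma measurableSet_tieSet (lam : Fin n → ℝ) : MeasurableSet (tieSet lam) := by
  unfold tieSet
  measurability

lemma laguerre_subset_greedyWinnerIn {H : Finset (Fin n)} {j : Fin n} (hj : j ∈ H) :
    laguerre xbar lam j ⊆ greedyWinnerIn lam H :=
  fun _ hx k hk => ⟨j, hj, hx.2 k fun h => hk (h ▸ hj)⟩

lemma pairwise_disjoint_laguerre : Pairwise (Disjoint on laguerre xbar lam) :=
  fun j k hjk => disjoint_left.mpr fun _ hj hk => (hj.2 k hjk.symm).asymm (hk.2 j hjk)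

lemma isSignedUpperSet_greedyWinnerIn (H : Finset (Fin n)) :
    IsSignedUpperSet H (greedyWinnerIn lam H) := by
  intro x y hxy hyx hx j hj
  obtain ⟨j', hj', hlt⟩ := hx j hj
  exact ⟨j', hj', by linarith [hyx j hj, hxy j' hj']⟩

lemma greedyWinnerIn_subset_greedyWinnerIn {lam₁ lam₂ : Fin n → ℝ} {H : Finset (Fin n)}
    (h : ∀ j ∈ H, ∀ k ∉ H, lam₁ k - lam₂ k ≤ lam₁ j - lam₂ j) :
    greedyWinnerIn lam₂ H ⊆ greedyWinnerIn lam₁ H := by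
  intro x hx k hk
  obtain ⟨j, hj, hlt⟩ := hx k hk
  exact ⟨j, hj, by linarith [h j hj k hk]⟩

lemma exists_mem_laguerre [NeZero n] {x : Fin n → ℝ} (hx_box : ∀ j, x j ∈ Icc 0 xbar)
    (hx_tie : x ∉ tieSet lam) : ∃ i, x ∈ laguerre xbar lam i := by
  obtain ⟨i, -, hi⟩ := Finset.exists_max_image Finset.univ (fun j => x j + lam j)
    Finset.univ_nonempty
  refine ⟨i, hx_box, fun j hji => (hi j (Finset.mem_univ j)).lt_of_ne fun h => hx_tie ?_⟩
  exact mem_iUnion₂.mpr ⟨j, i, mem_iUnion.mpr ⟨hji, h⟩⟩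

lemma greedyWinnerIn_subset [NeZero n] (H : Finset (Fin n)) :
    greedyWinnerIn lam H ⊆
      (⋃ j ∈ H, laguerre xbar lam j) ∪ (tieSet lam ∪ (univ.pi fun _ => Icc 0 xbar)ᶜ) := by
  intro x hx
  by_cases hx_box : ∀ j, x j ∈ Icc 0 xbar
  swap
  · exact .inr (.inr fun h => hx_box fun j => h j (mem_univ j))
  by_cases hx_tie : x ∈ tieSet lam
  · exact .inr (.inl hx_tie)
  obtain ⟨i, hi⟩ := exists_mem_laguerre hx_box hx_tie
  refine .inl (mem_biUnion (by_contra fun hiH => ?_) hi)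
  obtain ⟨j, hj, hlt⟩ := hx i hiH
  exact (hi.2 j fun h => hiH (h ▸ hj)).asymm hlt

lemma laguerre_sdiff_laguerre_subset [NeZero n] {lam₁ lam₂ : Fin n → ℝ} {H : Finset (Fin n)}
    {i : Fin n} (hi : i ∈ H) (hH : ∀ j ∈ H, lam₁ i - lam₂ i ≤ lam₁ j - lam₂ j) :
    laguerre xbar lam₁ i \ laguerre xbar lam₂ i ⊆
      (greedyWinnerIn lam₁ H \ greedyWinnerIn lam₂ H) ∪ tieSet lam₂ := by
  rintro x ⟨hx₁, hx₂⟩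
  by_cases hx_tie : x ∈ tieSet lam₂
  · exact .inr hx_tie
  obtain ⟨j, hj⟩ := exists_mem_laguerre hx₁.1 hx_tie
  have hji : j ≠ i := fun h => hx₂ (h ▸ hj)
  have hjH : j ∉ H := fun hjH => by
    linarith [hH j hjH, hx₁.2 j hji, hj.2 i hji.symm]
  refine .inl ⟨laguerre_subset_greedyWinnerIn hi hx₁, fun hV => ?_⟩
  obtain ⟨k, hk, hlt⟩ := hV j hjH
  exact (hj.2 k fun h => hjH (h ▸ hk)).asymm hlt

end Laguerre

section Measure

variable {m : ℕ} {xbar : ℝ} {lam : Fin (m + 1) → ℝ}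

lemma Measure.pi_tieSet_eq_zero (ν : Fin (m + 1) → Measure ℝ) [∀ j, SigmaFinite (ν j)]
    [∀ j, NullSingletonClass (ν j)] (lam : Fin (m + 1) → ℝ) : Measure.pi ν (tieSet lam) = 0 := by
  refine measure_iUnion_null fun j => measure_iUnion_null fun k => measure_iUnion_null fun hjk => ?_
  obtain ⟨j, rfl⟩ := Fin.exists_succAbove_eq hjk
  have h_meas : MeasurableSet {x : Fin (m + 1) → ℝ | x (k.succAbove j) + lam (k.succAbove j) =
      x k + lam k} := by measurability
  rw [Measure.pi_apply_eq_lintegral_fiber ν k h_meas]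
  have h_fiber (y : Fin m → ℝ) : {t | y j + lam (k.succAbove j) = t + lam k} =
      {y j + lam (k.succAbove j) - lam k} := by
    ext t; simp only [mem_ofPred_eq, mem_singleton_iff]; constructor <;> intro h <;> linarith
  simp [h_fiber]

lemma sum_measureReal_laguerre_le {n : ℕ} (μ : Measure (Fin n → ℝ)) [IsFiniteMeasure μ]
    (xbar : ℝ) (lam : Fin n → ℝ) (H : Finset (Fin n)) :
    ∑ j ∈ H, μ.real (laguerre xbar lam j) ≤ μ.real (greedyWinnerIn lam H) := by
  rw [← measureReal_biUnion_finset (pairwise_disjoint_laguerre.set_pairwise _)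
    fun j _ => measurableSet_laguerre xbar lam j]
  exact measureReal_mono (iUnion₂_subset fun _ => laguerre_subset_greedyWinnerIn)

lemma Measure.pi_real_greedyWinnerIn_le (ν : Fin (m + 1) → Measure ℝ)
    [∀ j, IsProbabilityMeasure (ν j)] [∀ j, NullSingletonClass (ν j)]
    (h_supp : ∀ j, ν j (Icc 0 xbar) = 1) (H : Finset (Fin (m + 1))) :
    (Measure.pi ν).real (greedyWinnerIn lam H) ≤
      ∑ j ∈ H, (Measure.pi ν).real (laguerre xbar lam j) := by
  have h_box : Measure.pi ν (univ.pi fun _ => Icc 0 xbar)ᶜ = 0 := by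
    rw [prob_compl_eq_zero_iff (.univ_pi fun _ => measurableSet_Icc), Measure.pi_pi]
    simp [h_supp]
  have h_null : (Measure.pi ν).real (tieSet lam ∪ (univ.pi fun _ => Icc 0 xbar)ᶜ) = 0 := by
    rw [measureReal_eq_zero_iff, measure_union_null (Measure.pi_tieSet_eq_zero ν lam) h_box]
  rw [← measureReal_biUnion_finset (pairwise_disjoint_laguerre.set_pairwise _)
    fun j _ => measurableSet_laguerre xbar lam j]
  calc _ ≤ (Measure.pi ν).real
        ((⋃ j ∈ H, laguerre xbar lam j) ∪ (tieSet lam ∪ (univ.pi fun _ => Icc 0 xbar)ᶜ)) :=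
        measureReal_mono (greedyWinnerIn_subset H)
    _ ≤ _ := (measureReal_union_le _ _).trans_eq (by rw [h_null, add_zero])

lemma Measure.pi_real_laguerre_sdiff_le {F M₁ M₂ : Fin (m + 1) → Measure ℝ}
    [∀ j, IsProbabilityMeasure (F j)] [∀ j, IsProbabilityMeasure (M₁ j)]
    [∀ j, IsProbabilityMeasure (M₂ j)] [∀ j, NullSingletonClass (F j)]
    [∀ j, NullSingletonClass (M₁ j)] [∀ j, NullSingletonClass (M₂ j)]
    (h_supp : ∀ j, M₁ j (Icc 0 xbar) = 1) {Δ₁ Δ₂ : ℝ}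
    (hc₁ : ∀ j x, |mcdf (F j) x - mcdf (M₁ j) x| ≤ Δ₁)
    (hc₂ : ∀ j x, |mcdf (F j) x - mcdf (M₂ j) x| ≤ Δ₂) {lam₁ lam₂ : Fin (m + 1) → ℝ}
    (h_frac : ∀ j, (Measure.pi M₁).real (laguerre xbar lam₁ j) =
      (Measure.pi M₂).real (laguerre xbar lam₂ j)) (i : Fin (m + 1)) :
    (Measure.pi F).real (laguerre xbar lam₁ i \ laguerre xbar lam₂ i) ≤
      (m + 1 : ℕ) * (Δ₁ + Δ₂) := by
  classical
  set H := Finset.univ.filter fun j => lam₁ i - lam₂ i ≤ lam₁ j - lam₂ j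
  have hH (j) (hj : j ∈ H) : lam₁ i - lam₂ i ≤ lam₁ j - lam₂ j := (Finset.mem_filter.mp hj).2
  have hV : greedyWinnerIn lam₂ H ⊆ greedyWinnerIn lam₁ H :=
    greedyWinnerIn_subset_greedyWinnerIn fun j hj k hk => by
      simp only [H, Finset.mem_filter, Finset.mem_univ, true_and, not_le] at hk
      linarith [hH j hj]
  have h_sub : laguerre xbar lam₁ i \ laguerre xbar lam₂ i ⊆
      (greedyWinnerIn lam₁ H \ greedyWinnerIn lam₂ H) ∪ tieSet lam₂ :=
    laguerre_sdiff_laguerre_subset (by simp [H]) hH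
  have hc₂' (j x) : |mcdf (M₂ j) x - mcdf (F j) x| ≤ Δ₂ := abs_sub_comm (mcdf (F j) x) _ ▸ hc₂ j x
  have h_hyb₁ := Measure.pi_real_le_add_of_mcdf_close hc₁ (measurableSet_greedyWinnerIn lam₁ H)
    (isSignedUpperSet_greedyWinnerIn H)
  have h_hyb₂ := Measure.pi_real_le_add_of_mcdf_close hc₂' (measurableSet_greedyWinnerIn lam₂ H)
    (isSignedUpperSet_greedyWinnerIn H)
  have h_sum₁ := Measure.pi_real_greedyWinnerIn_le M₁ h_supp (lam := lam₁) H
  have h_sum₂ := sum_measureReal_laguerre_le (Measure.pi M₂) xbar lam₂ H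
  calc (Measure.pi F).real (laguerre xbar lam₁ i \ laguerre xbar lam₂ i)
      ≤ (Measure.pi F).real (greedyWinnerIn lam₁ H \ greedyWinnerIn lam₂ H) := by
        refine (measureReal_mono h_sub).trans ((measureReal_union_le _ _).trans_eq ?_)
        rw [measureReal_def (s := tieSet lam₂), Measure.pi_tieSet_eq_zero, ENNReal.toReal_zero,
          add_zero]
    _ = (Measure.pi F).real (greedyWinnerIn lam₁ H) - (Measure.pi F).real (greedyWinnerIn lam₂ H) :=
        measureReal_sdiff hV (measurableSet_greedyWinnerIn lam₂ H)
    _ ≤ (m + 1 : ℕ) * (Δ₁ + Δ₂) := by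
        simp only [h_frac] at h_sum₁
        linarith

lemma integrableOn_laguerre {n : ℕ} (μ : Measure (Fin n → ℝ)) [IsFiniteMeasure μ] (xbar : ℝ)
    (lam : Fin n → ℝ) (i k : Fin n) : IntegrableOn (fun x => x k) (laguerre xbar lam i) μ := by
  refine Measure.integrableOn_of_bounded (M := xbar) (measure_ne_top _ _)
    (measurable_pi_apply k).aestronglyMeasurable
    ((ae_restrict_iff' (measurableSet_laguerre xbar lam i)).mpr (ae_of_all _ fun x hx => ?_))
  rw [norm_eq_abs, abs_le]
  constructor <;> linarith [(hx.1 k).1, (hx.1 k).2]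

lemma setIntegral_laguerre_sub_setIntegral_laguerre_le {n : ℕ} (μ : Measure (Fin n → ℝ))
    [IsFiniteMeasure μ] {xbar : ℝ} (hxbar : 0 ≤ xbar) (lam₁ lam₂ : Fin n → ℝ) (i : Fin n) {ε : ℝ}
    (h : μ.real (laguerre xbar lam₁ i \ laguerre xbar lam₂ i) ≤ ε) :
    (∫ x in laguerre xbar lam₁ i, x i ∂μ) - ∫ x in laguerre xbar lam₂ i, x i ∂μ ≤ ε * xbar :=
  calc _ ≤ xbar * μ.real (laguerre xbar lam₁ i \ laguerre xbar lam₂ i) :=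
        setIntegral_sub_setIntegral_le (measurableSet_laguerre _ _ _) (measurableSet_laguerre _ _ _)
          (integrableOn_laguerre _ _ _ _ _) (integrableOn_laguerre _ _ _ _ _)
          (fun x hx => (hx.1 i).2) fun x hx => (hx.1 i).1
    _ ≤ ε * xbar := by rw [mul_comm]; gcongr

end Measure

theorem utility_bound_from_learning_error_general
    {n : ℕ} (xbar Δ : ℝ) (hxbar : 0 < xbar)
    (Fm Gm : Fin n → Measure ℝ)
    [∀ j, IsProbabilityMeasure (Fm j)] [∀ j, IsProbabilityMeasure (Gm j)]
    (hFsupp : ∀ j, Fm j (Set.Icc (0 : ℝ) xbar) = 1)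
    (hGsupp : ∀ j, Gm j (Set.Icc (0 : ℝ) xbar) = 1)
    (hFcont : ∀ j, Continuous (mcdf (Fm j)))
    (hGcont : ∀ j, Continuous (mcdf (Gm j)))
    (hclose : ∀ j x, |mcdf (Fm j) x - mcdf (Gm j) x| ≤ Δ)
    (pstar : Fin n → ℝ)
    (lam lamstar : Fin n → ℝ)
    (hlam : ∀ j, pAlloc xbar (Measure.pi Gm) lam j = pstar j)
    (hlamstar : ∀ j, pAlloc xbar (Measure.pi Fm) lamstar j = pstar j)
    (i : Fin n) :
    |(∫ x in laguerre xbar lam i, x i ∂Measure.pi Fm) -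
      (∫ x in laguerre xbar lamstar i, x i ∂Measure.pi Fm)| ≤ n * Δ * xbar := by
  obtain ⟨m, rfl⟩ : ∃ m, n = m + 1 := ⟨n - 1, by have := i.pos; omega⟩
  have : ∀ j, NullSingletonClass (Fm j) := fun j => nullSingletonClass_of_continuous_mcdf (hFcont j)
  have : ∀ j, NullSingletonClass (Gm j) := fun j => nullSingletonClass_of_continuous_mcdf (hGcont j)
  have h_self (j x) : |mcdf (Fm j) x - mcdf (Fm j) x| ≤ 0 := by simp
  have h_frac (j) : (Measure.pi Gm).real (laguerre xbar lam j) =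
      (Measure.pi Fm).real (laguerre xbar lamstar j) := (hlam j).trans (hlamstar j).symm
  rw [abs_sub_le_iff]
  push_cast
  constructor
  · refine setIntegral_laguerre_sub_setIntegral_laguerre_le _ hxbar.le lam lamstar i ?_
    simpa using Measure.pi_real_laguerre_sdiff_le hGsupp hclose h_self h_frac i
  · refine setIntegral_laguerre_sub_setIntegral_laguerre_le _ hxbar.le lamstar lam i ?_
    simpa using Measure.pi_real_laguerre_sdiff_le hFsupp h_self hclose (fun j => (h_frac j).symm) i

/-- If `G = G¹ ⊗ … ⊗ Gⁿ` and `F = F¹ ⊗ … ⊗ Fⁿ` are product distributions on `[0,x̄]^n` with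
continuous marginal CDFs that are uniformly within `Δ` of each other coordinatewise, and
`λ` (resp. `λ*`) is a greedy policy achieving the target fractions `p*` under `G` (resp. `F`),
then agent `i`'s expected utilities under the two policies (with values drawn from `F`)
differ by at most `n Δ x̄`. -/
theorem utility_bound_from_learning_error
    {n : ℕ} (xbar Δ : ℝ) (hxbar : 0 < xbar)
    (Fm Gm : Fin n → Measure ℝ)
    [∀ j, IsProbabilityMeasure (Fm j)] [∀ j, IsProbabilityMeasure (Gm j)]
    (hFsupp : ∀ j, Fm j (Set.Icc (0 : ℝ) xbar) = 1)
    (hGsupp : ∀ j, Gm j (Set.Icc (0 : ℝ) xbar) = 1)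
    (hFcont : ∀ j, Continuous (mcdf (Fm j)))
    (hGcont : ∀ j, Continuous (mcdf (Gm j)))
    (hclose : ∀ j x, |mcdf (Fm j) x - mcdf (Gm j) x| ≤ Δ)
    (pstar : Fin n → ℝ) (hpos : ∀ j, 0 < pstar j) (hsum : ∑ j, pstar j = 1)
    (lam lamstar : Fin n → ℝ)
    (hlam : ∀ j, pAlloc xbar (Measure.pi Gm) lam j = pstar j)
    (hlamstar : ∀ j, pAlloc xbar (Measure.pi Fm) lamstar j = pstar j)
    (i : Fin n) :
    |(∫ x in laguerre xbar lam i, x i ∂Measure.pi Fm) -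
      (∫ x in laguerre xbar lamstar i, x i ∂Measure.pi Fm)| ≤ n * Δ * xbar :=
  utility_bound_from_learning_error_general xbar Δ hxbar Fm Gm hFsupp hGsupp hFcont hGcont hclose
    pstar lam lamstar hlam hlamstar i
end
end

section
/- Let Y be a real random variable with CDF F, and let U ∼ Uniform[0,1] be independent of Y. Define V = F(Y^−) + U · ( F(Y) − F(Y^−) ), where F(y^−) denotes the left limit of F at y. Then V is uniformly distributed on [0,1]. -/
/-!
Write `F` for the CDF of `ν = law Y`, so that `V = g (Y, U)` with
`g (y, u) = F(y⁻) + u (F(y) - F(y⁻))` and `(Y, U) ∼ ν ⊗ Unif[0, 1]` by independence.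
For `0 ≤ t < 1` let `q = inf {F > t}`: then `F ≤ t` left of `q`, `F > t` right of `q`, and
`F(q⁻) ≤ t ≤ F(q)`. As `g` maps the fibre over `y` into `[F(y⁻), F(y)]`, the set `{g ≤ t}` is the
strip `(-∞, q) × [0, 1]` plus the part of `{q} × [0, 1]` where `u (F(q) - F(q⁻)) ≤ t - F(q⁻)`,
of mass `F(q⁻) + (t - F(q⁻)) = t`.
-/

open MeasureTheory ProbabilityTheory Real

noncomputable section

/-- Left limit of the CDF of a measure on `ℝ` (i.e. `F(x⁻) = P(Y < x)`). -/
def mcdfLeft (μ : Measure ℝ) (x : ℝ) : ℝ := (μ (Set.Iio x)).toReal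

open Set Function

lemma ofReal_mul_volume_setOf_add_mul_le {a d t : ℝ} (ha : a ≤ t) (hd : t ≤ a + d) :
    ENNReal.ofReal d * volume {u ∈ Icc (0 : ℝ) 1 | a + u * d ≤ t} = ENNReal.ofReal (t - a) := by
  rcases (show 0 ≤ d by linarith).eq_or_lt with rfl | hd0
  · obtain rfl : t = a := by linarith
    simp
  have hset : {u ∈ Icc (0 : ℝ) 1 | a + u * d ≤ t} = Icc 0 ((t - a) / d) := by
    have hc : (t - a) / d ≤ 1 := (div_le_one hd0).2 (by linarith)
    ext u
    simp only [mem_ofPred_eq, mem_Icc, le_div_iff₀ hd0]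
    constructor
    · rintro ⟨⟨hu0, -⟩, hu⟩
      exact ⟨hu0, by linarith⟩
    · rintro ⟨hu0, hu⟩
      exact ⟨⟨hu0, ((le_div_iff₀ hd0).2 hu).trans hc⟩, by linarith⟩
  rw [hset, Real.volume_Icc, sub_zero, ← ENNReal.ofReal_mul hd0.le, mul_div_cancel₀ _ hd0.ne']

namespace ProbabilityTheory

section

variable {ν : Measure ℝ}

lemma leftLim_cdf_nonneg (x : ℝ) : 0 ≤ leftLim (cdf ν) x :=
  (cdf_nonneg ν (x - 1)).trans ((cdf ν).mono.le_leftLim (sub_one_lt x))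

variable (ν) in
def distribTransform (p : ℝ × ℝ) : ℝ :=
  leftLim (cdf ν) p.1 + p.2 * (cdf ν p.1 - leftLim (cdf ν) p.1)

lemma measurable_distribTransform : Measurable (distribTransform ν) :=
  ((cdf ν).mono.leftLim.measurable.comp measurable_fst).add
    (measurable_snd.mul (((cdf ν).mono.measurable.comp measurable_fst).sub
      ((cdf ν).mono.leftLim.measurable.comp measurable_fst)))

lemma distribTransform_mem_Icc {y u : ℝ} (hu : u ∈ Icc (0 : ℝ) 1) :
    distribTransform ν (y, u) ∈ Icc (leftLim (cdf ν) y) (cdf ν y) := by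
  have hjump : 0 ≤ cdf ν y - leftLim (cdf ν) y := sub_nonneg.2 ((cdf ν).mono.leftLim_le le_rfl)
  simp only [distribTransform, mem_Icc]
  constructor <;> nlinarith [hu.1, hu.2]

lemma distribTransform_le_iff {q t y u : ℝ} (hlt : ∀ y < q, cdf ν y ≤ t)
    (hgt : ∀ y, q < y → t < cdf ν y) (hu : u ∈ Icc (0 : ℝ) 1) :
    distribTransform ν (y, u) ≤ t ↔ y < q ∨ y = q ∧ distribTransform ν (q, u) ≤ t := by
  have hmem := distribTransform_mem_Icc (ν := ν) (y := y) hu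
  rcases lt_trichotomy y q with hyq | rfl | hqy
  · exact iff_of_true (hmem.2.trans (hlt y hyq)) (Or.inl hyq)
  · simp
  · obtain ⟨z, hqz, hzy⟩ := exists_between hqy
    refine iff_of_false (fun hle => ?_) (by simp [hqy.not_gt, hqy.ne'])
    exact ((hgt z hqz).trans_le (((cdf ν).mono.le_leftLim hzy).trans hmem.1)).not_ge hle

lemma exists_cdf_crossing {t : ℝ} (ht : t < 1) (hex : ∃ y, cdf ν y ≤ t) :
    ∃ q, (∀ y < q, cdf ν y ≤ t) ∧ ∀ y, q < y → t < cdf ν y := by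
  obtain ⟨y₀, hy₀⟩ := hex
  set S := {y | t < cdf ν y}
  have hS : S.Nonempty := ((tendsto_cdf_atTop ν).eventually_const_lt ht).exists
  have hSbdd : BddBelow S :=
    ⟨y₀, fun y hy => le_of_not_gt fun hlt => (hy.trans_le ((cdf ν).mono hlt.le)).not_ge hy₀⟩
  refine ⟨sInf S, fun y hy =>
    not_lt.1 (show y ∉ S from notMem_of_lt_csInf hy hSbdd), fun y hy => ?_⟩
  obtain ⟨s, hsS, hsy⟩ := exists_lt_of_csInf_lt hS hy
  exact hsS.trans_le ((cdf ν).mono hsy.le)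

end

variable {ν : Measure ℝ} [IsProbabilityMeasure ν]

lemma mcdf_eq_cdf : mcdf ν = cdf ν := funext fun x => (cdf_eq_real ν x).symm

lemma measure_Iio_eq_ofReal_leftLim_cdf (x : ℝ) :
    ν (Iio x) = ENNReal.ofReal (leftLim (cdf ν) x) := by
  conv_lhs => rw [← measure_cdf ν]
  rw [(cdf ν).measure_Iio (tendsto_cdf_atBot ν), sub_zero]

lemma measure_singleton_eq_ofReal_cdf_sub_leftLim (x : ℝ) :
    ν {x} = ENNReal.ofReal (cdf ν x - leftLim (cdf ν) x) := by
  conv_lhs => rw [← measure_cdf ν]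
  exact (cdf ν).measure_singleton x

lemma mcdfLeft_eq_leftLim_cdf : mcdfLeft ν = leftLim (cdf ν) := funext fun x => by
  rw [mcdfLeft, measure_Iio_eq_ofReal_leftLim_cdf, ENNReal.toReal_ofReal (leftLim_cdf_nonneg x)]

lemma prod_volume_distribTransform_preimage_Iic {q t : ℝ} (hlt : ∀ y < q, cdf ν y ≤ t)
    (hgt : ∀ y, q < y → t < cdf ν y) :
    (ν.prod volume) (distribTransform ν ⁻¹' Iic t ∩ univ ×ˢ Icc 0 1) = ENNReal.ofReal t := by
  have hleft : leftLim (cdf ν) q ≤ t :=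
    le_of_tendsto ((cdf ν).mono.tendsto_leftLim q) (eventually_nhdsWithin_of_forall hlt)
  have hright : t ≤ cdf ν q := by
    rw [← (cdf ν).iInf_Ioi_eq q]
    exact le_ciInf fun r => (hgt r r.2).le
  have hset : distribTransform ν ⁻¹' Iic t ∩ univ ×ˢ Icc 0 1 =
      Iio q ×ˢ Icc 0 1 ∪ {q} ×ˢ {u ∈ Icc (0 : ℝ) 1 | distribTransform ν (q, u) ≤ t} := by
    ext ⟨y, u⟩
    simp only [mem_inter_iff, mem_preimage, mem_Iic, mem_prod, mem_univ, true_and, mem_union,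
      mem_Iio, mem_singleton_iff, mem_ofPred_eq]
    constructor
    · rintro ⟨hle, hu⟩
      rcases (distribTransform_le_iff hlt hgt hu).1 hle with hyq | ⟨rfl, hqu⟩
      exacts [Or.inl ⟨hyq, hu⟩, Or.inr ⟨rfl, hu, hqu⟩]
    · rintro (⟨hyq, hu⟩ | ⟨rfl, hu, hqu⟩)
      exacts [⟨(distribTransform_le_iff hlt hgt hu).2 (Or.inl hyq), hu⟩, ⟨hqu, hu⟩]
  have hdisj : Disjoint (Iio q ×ˢ Icc (0 : ℝ) 1)
      ({q} ×ˢ {u ∈ Icc (0 : ℝ) 1 | distribTransform ν (q, u) ≤ t}) :=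
    disjoint_prod.2 (Or.inl (disjoint_singleton_right.2 (lt_irrefl q)))
  rw [hset, measure_union' hdisj (measurableSet_Iio.prod measurableSet_Icc), Measure.prod_prod,
    Measure.prod_prod, Real.volume_Icc, sub_zero, ENNReal.ofReal_one, mul_one,
    measure_Iio_eq_ofReal_leftLim_cdf, measure_singleton_eq_ofReal_cdf_sub_leftLim]
  simp only [distribTransform]
  rw [ofReal_mul_volume_setOf_add_mul_le hleft (by linarith),
    ← ENNReal.ofReal_add (leftLim_cdf_nonneg q) (by linarith), add_sub_cancel]

theorem map_distribTransform_prod_volume_Icc :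
    (ν.prod (volume.restrict (Icc (0 : ℝ) 1))).map (distribTransform ν) =
      volume.restrict (Icc 0 1) := by
  have hprod : ν.prod (volume.restrict (Icc (0 : ℝ) 1)) =
      (ν.prod volume).restrict (univ ×ˢ Icc 0 1) := by
    rw [← Measure.prod_restrict, Measure.restrict_univ]
  refine Measure.ext_of_Iic _ _ fun t => ?_
  rw [Measure.map_apply measurable_distribTransform measurableSet_Iic, hprod,
    Measure.restrict_apply (measurable_distribTransform measurableSet_Iic),
    Measure.restrict_apply measurableSet_Iic]
  by_cases hex : ∃ y, cdf ν y ≤ t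
  · rcases lt_or_ge t 1 with ht1 | ht1
    · obtain ⟨q, hlt, hgt⟩ := exists_cdf_crossing ht1 hex
      have ht0 : 0 ≤ t := hex.elim fun y hy => (cdf_nonneg ν y).trans hy
      have hIcc : Iic t ∩ Icc (0 : ℝ) 1 = Icc 0 t := by
        ext x; simp only [mem_inter_iff, mem_Iic, mem_Icc]; grind
      rw [prod_volume_distribTransform_preimage_Iic hlt hgt, hIcc, Real.volume_Icc, sub_zero]
    · have hall : distribTransform ν ⁻¹' Iic t ∩ univ ×ˢ Icc 0 1 = univ ×ˢ Icc 0 1 :=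
        inter_eq_right.2 fun p hp =>
          ((distribTransform_mem_Icc (y := p.1) hp.2).2.trans (cdf_le_one ν p.1)).trans ht1
      rw [hall, inter_eq_right.2 fun x hx => hx.2.trans ht1, Measure.prod_prod, measure_univ,
        one_mul]
  · push Not at hex
    have ht0 : t ≤ 0 := ge_of_tendsto' (tendsto_cdf_atBot ν) fun y => (hex y).le
    -- for `u > 0`, `F(y⁻) + u (F(y) - F(y⁻)) ≥ u F(y) > u t ≥ t`
    have hnull : distribTransform ν ⁻¹' Iic t ∩ univ ×ˢ Icc 0 1 ⊆ univ ×ˢ {0} := by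
      rintro ⟨y, u⟩ ⟨hle, -, hu⟩
      refine ⟨trivial, le_antisymm (not_lt.1 fun hu0 => ?_) hu.1⟩
      have := (distribTransform_mem_Icc (ν := ν) (y := y) hu).1
      simp only [mem_preimage, mem_Iic, distribTransform] at hle this
      nlinarith [leftLim_cdf_nonneg (ν := ν) y, hex y, hu.2]
    rw [measure_mono_null hnull (by simp [Measure.prod_prod]),
      measure_mono_null (fun x (hx : x ∈ Iic t ∩ Icc 0 1) => show x ∈ ({0} : Set ℝ) from
        le_antisymm (hx.1.trans ht0) hx.2.1)
      Real.volume_singleton]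

end ProbabilityTheory

/-- **The distributional transform is uniform.**  If `Y` has CDF `F` and `U ∼ Uniform[0,1]`
is independent of `Y`, then `V = F(Y⁻) + U·(F(Y) − F(Y⁻))` is uniformly distributed on
`[0,1]`. -/
theorem distributional_transform_uniform
    {Ω : Type*} [MeasurableSpace Ω] (μ : Measure Ω) [IsProbabilityMeasure μ]
    (Y U : Ω → ℝ) (hY : Measurable Y) (hU : Measurable U)
    (hUlaw : μ.map U = volume.restrict (Set.Icc (0 : ℝ) 1))
    (hindep : IndepFun Y U μ) :
    μ.map (fun ω =>
        mcdfLeft (μ.map Y) (Y ω) +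
          U ω * (mcdf (μ.map Y) (Y ω) - mcdfLeft (μ.map Y) (Y ω))) =
      volume.restrict (Set.Icc (0 : ℝ) 1) := by
  have : IsProbabilityMeasure (μ.map Y) := Measure.isProbabilityMeasure_map hY.aemeasurable
  have hpair : μ.map (fun ω => (Y ω, U ω)) = (μ.map Y).prod (μ.map U) :=
    (indepFun_iff_map_prod_eq_prod_map_map hY.aemeasurable hU.aemeasurable).1 hindep
  rw [mcdf_eq_cdf, mcdfLeft_eq_leftLim_cdf]
  change μ.map (distribTransform (μ.map Y) ∘ fun ω => (Y ω, U ω)) = _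
  rw [← Measure.map_map measurable_distribTransform (hY.prodMk hU), hpair, hUlaw,
    map_distribTransform_prod_volume_Icc]
end
end

section
/- Fix λ ∈ ℝ^n and an index i. Let F be a continuous CDF of a probability distribution supported in [0, x̄] and let G be a CDF of a probability distribution supported in [0, x̄]. For a coupling r (a probability measure on [0, x̄]² whose first marginal has CDF G and whose second marginal has CDF F), define U(r) = ∫ x · Π_{j≠i} F( x̃ + λ_i − λ_j ) dr(x̃, x). Then U(r*) ≥ U(r) for every coupling r of G and F, where r* is the unique coupling of G and F concentrated on a monotone set (the comonotone coupling). -/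
open MeasureTheory ProbabilityTheory Real

noncomputable section

/-- A set `S ⊆ ℝ × ℝ` is monotone if for all `(x₁,y₁), (x₂,y₂) ∈ S`, `y₁ < y₂ → x₁ ≤ x₂`. -/
def IsMonotoneSet (S : Set (ℝ × ℝ)) : Prop :=
  ∀ p ∈ S, ∀ q ∈ S, p.2 < q.2 → p.1 ≤ q.1

lemma mcdf_mono (μ : Measure ℝ) [IsFiniteMeasure μ] : Monotone (mcdf μ) := fun a b hab =>
  ENNReal.toReal_mono (measure_ne_top μ _) (measure_mono (Set.Iic_subset_Iic.2 hab))

lemma mcdf_nonneg (μ : Measure ℝ) (x : ℝ) : 0 ≤ mcdf μ x := ENNReal.toReal_nonneg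

lemma mcdf_le_one (μ : Measure ℝ) [IsProbabilityMeasure μ] (x : ℝ) : mcdf μ x ≤ 1 := by
  simpa [mcdf] using ENNReal.toReal_mono (by simp) (prob_le_one (μ := μ) (s := Set.Iic x))

lemma marg_fst {μ : Measure (ℝ × ℝ)} {ν : Measure ℝ} (h : μ.map Prod.fst = ν)
    {A : Set ℝ} (hA : MeasurableSet A) : μ (A ×ˢ Set.univ) = ν A := by
  rw [← h, Measure.map_apply measurable_fst hA, Set.prod_univ]

lemma marg_snd {μ : Measure (ℝ × ℝ)} {ν : Measure ℝ} (h : μ.map Prod.snd = ν)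
    {B : Set ℝ} (hB : MeasurableSet B) : μ (Set.univ ×ˢ B) = ν B := by
  rw [← h, Measure.map_apply measurable_snd hB, Set.univ_prod]

/-- Fréchet upper bound for any coupling. -/
lemma coupling_prod_le
    {Fm Gm : Measure ℝ} {μ : Measure (ℝ × ℝ)}
    (h1 : μ.map Prod.fst = Gm) (h2 : μ.map Prod.snd = Fm)
    {A B : Set ℝ} (hA : MeasurableSet A) (hB : MeasurableSet B) :
    μ (A ×ˢ B) ≤ min (Gm A) (Fm B) := by
  refine le_min ?_ ?_
  · rw [← marg_fst h1 hA]
    exact measure_mono (Set.prod_mono_right (Set.subset_univ _))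
  · rw [← marg_snd h2 hB]
    exact measure_mono (Set.prod_mono_left (Set.subset_univ _))

/-- A coupling concentrated on a monotone set achieves the Fréchet upper bound on
products of an upper set with a ray. -/
lemma comonotone_prod_ge
    {Fm Gm : Measure ℝ} {rstar : Measure (ℝ × ℝ)} [IsProbabilityMeasure rstar]
    (h1 : rstar.map Prod.fst = Gm) (h2 : rstar.map Prod.snd = Fm)
    {S : Set (ℝ × ℝ)} (hS : rstar S = 1) (hmonoS : IsMonotoneSet S)
    {A : Set ℝ} (hA : MeasurableSet A) (hup : ∀ ⦃x y : ℝ⦄, x ∈ A → x ≤ y → y ∈ A)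
    (s : ℝ) :
    min (Gm A) (Fm (Set.Ioi s)) ≤ rstar (A ×ˢ Set.Ioi s) := by
  have hnull : ∀ E : Set (ℝ × ℝ), MeasurableSet E → S ∩ E = ∅ → rstar E = 0 := by
    intro E hE hSE
    have hsub : S ⊆ Eᶜ := fun z hz hzE =>
      Set.eq_empty_iff_forall_notMem.mp hSE z ⟨hz, hzE⟩
    have h1' : rstar Eᶜ = 1 :=
      le_antisymm (prob_le_one) (hS ▸ measure_mono hsub)
    exact (prob_compl_eq_one_iff hE).mp h1'
  by_cases hcase : S ∩ (Aᶜ ×ˢ Set.Ioi s) = ∅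
  · have h0 : rstar (Aᶜ ×ˢ Set.Ioi s) = 0 :=
      hnull _ (hA.compl.prod measurableSet_Ioi) hcase
    have hcover : (Set.univ ×ˢ Set.Ioi s : Set (ℝ × ℝ)) ⊆
        (A ×ˢ Set.Ioi s) ∪ (Aᶜ ×ˢ Set.Ioi s) := by
      rintro ⟨x, y⟩ ⟨-, hy⟩
      by_cases hx : x ∈ A
      · exact Or.inl ⟨hx, hy⟩
      · exact Or.inr ⟨hx, hy⟩
    calc min (Gm A) (Fm (Set.Ioi s)) ≤ Fm (Set.Ioi s) := min_le_right _ _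
      _ = rstar (Set.univ ×ˢ Set.Ioi s) := (marg_snd h2 measurableSet_Ioi).symm
      _ ≤ rstar (A ×ˢ Set.Ioi s) + rstar (Aᶜ ×ˢ Set.Ioi s) :=
          (measure_mono hcover).trans (measure_union_le _ _)
      _ = rstar (A ×ˢ Set.Ioi s) := by rw [h0, add_zero]
  · obtain ⟨p, hpS, hpA, hps⟩ : ∃ p, p ∈ S ∧ p.1 ∈ Aᶜ ∧ s < p.2 := by
      obtain ⟨p, hp⟩ := Set.nonempty_iff_ne_empty.2 hcase
      exact ⟨p, hp.1, hp.2.1, hp.2.2⟩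
    have hcase2 : S ∩ (A ×ˢ (Set.Ioi s)ᶜ) = ∅ := by
      rw [Set.eq_empty_iff_forall_notMem]
      intro q hq
      have hqs : q.2 ≤ s := not_lt.1 hq.2.2
      have hle : q.1 ≤ p.1 := hmonoS q hq.1 p hpS (lt_of_le_of_lt hqs hps)
      exact hpA (hup hq.2.1 hle)
    have h0 : rstar (A ×ˢ (Set.Ioi s)ᶜ) = 0 :=
      hnull _ (hA.prod measurableSet_Ioi.compl) hcase2
    have hcover : (A ×ˢ Set.univ : Set (ℝ × ℝ)) ⊆
        (A ×ˢ Set.Ioi s) ∪ (A ×ˢ (Set.Ioi s)ᶜ) := by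
      rintro ⟨x, y⟩ ⟨hx, -⟩
      by_cases hy : y ∈ Set.Ioi s
      · exact Or.inl ⟨hx, hy⟩
      · exact Or.inr ⟨hx, hy⟩
    calc min (Gm A) (Fm (Set.Ioi s)) ≤ Gm A := min_le_left _ _
      _ = rstar (A ×ˢ Set.univ) := (marg_fst h1 hA).symm
      _ ≤ rstar (A ×ˢ Set.Ioi s) + rstar (A ×ˢ (Set.Ioi s)ᶜ) :=
          (measure_mono hcover).trans (measure_union_le _ _)
      _ = rstar (A ×ˢ Set.Ioi s) := by rw [h0, add_zero]

/-- Layer-cake representation of the lintegral of `p.2 * g p.1`. -/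
lemma lintegral_layer_cake
    {g : ℝ → ℝ} (hg : Continuous g) (μ : Measure (ℝ × ℝ)) [IsProbabilityMeasure μ] :
    ∫⁻ p, ENNReal.ofReal p.2 * ENNReal.ofReal (g p.1) ∂μ =
      ∫⁻ q, μ {p : ℝ × ℝ | (0 < q.1 ∧ q.1 < p.2) ∧ 0 < q.2 ∧ q.2 < g p.1}
        ∂((volume : Measure ℝ).prod volume) := by
  have key : ∀ p : ℝ × ℝ, ENNReal.ofReal p.2 * ENNReal.ofReal (g p.1) =
      ((volume : Measure ℝ).prod volume) (Set.Ioo 0 p.2 ×ˢ Set.Ioo 0 (g p.1)) := by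
    intro p
    rw [Measure.prod_prod, Real.volume_Ioo, Real.volume_Ioo, sub_zero, sub_zero]
  have hWmeas : MeasurableSet {z : (ℝ × ℝ) × (ℝ × ℝ) |
      (0 < z.2.1 ∧ z.2.1 < z.1.2) ∧ 0 < z.2.2 ∧ z.2.2 < g z.1.1} := by
    apply MeasurableSet.inter
    · exact MeasurableSet.inter
        (measurableSet_lt measurable_const (measurable_fst.comp measurable_snd))
        (measurableSet_lt (measurable_fst.comp measurable_snd)
          (measurable_snd.comp measurable_fst))
    · exact MeasurableSet.inter
        (measurableSet_lt measurable_const (measurable_snd.comp measurable_snd))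
        (measurableSet_lt (measurable_snd.comp measurable_snd)
          ((hg.measurable.comp measurable_fst).comp measurable_fst))
  have hswap : ∫⁻ p, ∫⁻ q, ({z : (ℝ × ℝ) × (ℝ × ℝ) |
        (0 < z.2.1 ∧ z.2.1 < z.1.2) ∧ 0 < z.2.2 ∧ z.2.2 < g z.1.1}.indicator 1 (p, q)) ∂((volume : Measure ℝ).prod volume) ∂μ =
      ∫⁻ q, ∫⁻ p, ({z : (ℝ × ℝ) × (ℝ × ℝ) |
        (0 < z.2.1 ∧ z.2.1 < z.1.2) ∧ 0 < z.2.2 ∧ z.2.2 < g z.1.1}.indicator 1 (p, q)) ∂μ ∂((volume : Measure ℝ).prod volume) := by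
    apply lintegral_lintegral_swap
    exact (Measurable.indicator measurable_one hWmeas).aemeasurable
  calc ∫⁻ p, ENNReal.ofReal p.2 * ENNReal.ofReal (g p.1) ∂μ
      = ∫⁻ p, ∫⁻ q, ({z : (ℝ × ℝ) × (ℝ × ℝ) |
          (0 < z.2.1 ∧ z.2.1 < z.1.2) ∧ 0 < z.2.2 ∧ z.2.2 < g z.1.1}.indicator 1 (p, q)) ∂((volume : Measure ℝ).prod volume) ∂μ := by
        apply lintegral_congr
        intro p
        rw [key p]
        have : ∀ q : ℝ × ℝ, ({z : (ℝ × ℝ) × (ℝ × ℝ) |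
            (0 < z.2.1 ∧ z.2.1 < z.1.2) ∧ 0 < z.2.2 ∧ z.2.2 < g z.1.1}.indicator
              (1 : (ℝ × ℝ) × (ℝ × ℝ) → ENNReal) (p, q))
            = (Set.Ioo 0 p.2 ×ˢ Set.Ioo 0 (g p.1)).indicator 1 q := fun q => rfl
        rw [lintegral_congr this, lintegral_indicator_one
          ((measurableSet_Ioo).prod (measurableSet_Ioo))]
    _ = ∫⁻ q, ∫⁻ p, ({z : (ℝ × ℝ) × (ℝ × ℝ) |
          (0 < z.2.1 ∧ z.2.1 < z.1.2) ∧ 0 < z.2.2 ∧ z.2.2 < g z.1.1}.indicator 1 (p, q)) ∂μ ∂((volume : Measure ℝ).prod volume) := hswap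
    _ = ∫⁻ q, μ {p : ℝ × ℝ | (0 < q.1 ∧ q.1 < p.2) ∧ 0 < q.2 ∧ q.2 < g p.1}
          ∂((volume : Measure ℝ).prod volume) := by
        apply lintegral_congr
        intro q
        have hsetmeas : MeasurableSet {p : ℝ × ℝ | (0 < q.1 ∧ q.1 < p.2) ∧ 0 < q.2 ∧ q.2 < g p.1} :=
          ((MeasurableSet.const _).inter
            (measurableSet_lt measurable_const measurable_snd)).inter
            ((MeasurableSet.const _).inter
              (measurableSet_lt measurable_const (hg.measurable.comp measurable_fst)))
        have : ∀ p : ℝ × ℝ, ({z : (ℝ × ℝ) × (ℝ × ℝ) |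
            (0 < z.2.1 ∧ z.2.1 < z.1.2) ∧ 0 < z.2.2 ∧ z.2.2 < g z.1.1}.indicator
              (1 : (ℝ × ℝ) × (ℝ × ℝ) → ENNReal) (p, q))
            = ({p : ℝ × ℝ | (0 < q.1 ∧ q.1 < p.2) ∧ 0 < q.2 ∧ q.2 < g p.1}.indicator 1 p) :=
          fun p => rfl
        rw [lintegral_congr this, lintegral_indicator_one hsetmeas]

/-- **The comonotone coupling maximizes the strategic agent's utility.**
Fix a greedy policy `λ` and an agent `i`.  `F` is the (continuous) common value
distribution on `[0,x̄]` and `G` a distribution of reported values on `[0,x̄]`.  For a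
coupling `r` of `G` (first marginal, the report `x̃`) and `F` (second marginal, the true
value `x`), the expected utility is `U(r) = ∫ x ∏_{j≠i} F(x̃ + λᵢ − λⱼ) dr(x̃, x)`.
Then the coupling `r*` concentrated on a monotone set satisfies `U(r*) ≥ U(r)` for every
coupling `r` of `G` and `F`. -/
theorem comonotone_coupling_maximizes_utility
    {n : ℕ} (xbar : ℝ) (lam : Fin n → ℝ) (i : Fin n)
    (Fm Gm : Measure ℝ) [IsProbabilityMeasure Fm] [IsProbabilityMeasure Gm]
    (hFsupp : Fm (Set.Icc (0 : ℝ) xbar) = 1)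
    (hGsupp : Gm (Set.Icc (0 : ℝ) xbar) = 1)
    (hFcont : Continuous (mcdf Fm))
    (r rstar : Measure (ℝ × ℝ)) [IsProbabilityMeasure r] [IsProbabilityMeasure rstar]
    (hr1 : r.map Prod.fst = Gm) (hr2 : r.map Prod.snd = Fm)
    (hrstar1 : rstar.map Prod.fst = Gm) (hrstar2 : rstar.map Prod.snd = Fm)
    (hmono : ∃ S : Set (ℝ × ℝ), rstar S = 1 ∧ IsMonotoneSet S) :
    (∫ p : ℝ × ℝ, p.2 * ∏ j ∈ Finset.univ.erase i, mcdf Fm (p.1 + lam i - lam j) ∂r) ≤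
      ∫ p : ℝ × ℝ, p.2 * ∏ j ∈ Finset.univ.erase i, mcdf Fm (p.1 + lam i - lam j) ∂rstar := by
  obtain ⟨S, hS, hmonoS⟩ := hmono
  set g : ℝ → ℝ := fun x => ∏ j ∈ Finset.univ.erase i, mcdf Fm (x + lam i - lam j) with hgdef
  have hgcont : Continuous g := by
    apply continuous_finset_prod
    intro j _
    exact hFcont.comp (by continuity)
  have hgmono : Monotone g := by
    intro a b hab
    apply Finset.prod_le_prod
    · intro j _; exact mcdf_nonneg _ _
    · intro j _
      exact mcdf_mono Fm (by linarith)
  have hgnonneg : ∀ x, 0 ≤ g x := fun x =>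
    Finset.prod_nonneg fun j _ => mcdf_nonneg _ _
  have hgle1 : ∀ x, g x ≤ 1 := fun x =>
    Finset.prod_le_one (fun j _ => mcdf_nonneg _ _) (fun j _ => mcdf_le_one _ _)
  -- a.e. bounds on the second coordinate
  have haebound : ∀ (μ : Measure (ℝ × ℝ)) [IsProbabilityMeasure μ],
      μ.map Prod.snd = Fm → ∀ᵐ p ∂μ, p.2 ∈ Set.Icc (0:ℝ) xbar := by
    intro μ _ hμ
    have hmeas : MeasurableSet {p : ℝ × ℝ | p.2 ∈ Set.Icc (0:ℝ) xbar} :=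
      measurable_snd measurableSet_Icc
    rw [ae_iff]
    have : {p : ℝ × ℝ | ¬ p.2 ∈ Set.Icc (0:ℝ) xbar} = {p : ℝ × ℝ | p.2 ∈ Set.Icc (0:ℝ) xbar}ᶜ := rfl
    rw [this, prob_compl_eq_zero_iff hmeas]
    have : {p : ℝ × ℝ | p.2 ∈ Set.Icc (0:ℝ) xbar} = Prod.snd ⁻¹' Set.Icc (0:ℝ) xbar := rfl
    rw [this, ← Measure.map_apply measurable_snd measurableSet_Icc, hμ, hFsupp]
  have hfcont : Continuous (fun p : ℝ × ℝ => p.2 * g p.1) :=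
    continuous_snd.mul (hgcont.comp continuous_fst)
  -- rewrite both integrals via lintegrals
  have hrepr : ∀ (μ : Measure (ℝ × ℝ)) [IsProbabilityMeasure μ],
      μ.map Prod.snd = Fm →
      ∫ p : ℝ × ℝ, p.2 * g p.1 ∂μ =
        (∫⁻ p, ENNReal.ofReal p.2 * ENNReal.ofReal (g p.1) ∂μ).toReal := by
    intro μ _ hμ
    have hae := haebound μ hμ
    have hnonneg : 0 ≤ᵐ[μ] fun p : ℝ × ℝ => p.2 * g p.1 := by
      filter_upwards [hae] with p hp
      exact mul_nonneg hp.1 (hgnonneg _)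
    rw [integral_eq_lintegral_of_nonneg_ae hnonneg hfcont.aestronglyMeasurable]
    congr 1
    apply lintegral_congr_ae
    filter_upwards [hae] with p hp
    exact ENNReal.ofReal_mul hp.1
  rw [show (fun p : ℝ × ℝ => p.2 * ∏ j ∈ Finset.univ.erase i, mcdf Fm (p.1 + lam i - lam j)) =
    (fun p : ℝ × ℝ => p.2 * g p.1) from rfl] at *
  rw [hrepr r hr2, hrepr rstar hrstar2]
  -- compare the lintegrals
  have hkey : (∫⁻ p, ENNReal.ofReal p.2 * ENNReal.ofReal (g p.1) ∂r) ≤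
      ∫⁻ p, ENNReal.ofReal p.2 * ENNReal.ofReal (g p.1) ∂rstar := by
    rw [lintegral_layer_cake hgcont r, lintegral_layer_cake hgcont rstar]
    refine lintegral_mono fun q => ?_
    show r {p : ℝ × ℝ | (0 < q.1 ∧ q.1 < p.2) ∧ 0 < q.2 ∧ q.2 < g p.1} ≤
      rstar {p : ℝ × ℝ | (0 < q.1 ∧ q.1 < p.2) ∧ 0 < q.2 ∧ q.2 < g p.1}
    by_cases h12 : 0 < q.1 ∧ 0 < q.2
    · have hset : ∀ (μ : Measure (ℝ × ℝ)),
          μ {p : ℝ × ℝ | (0 < q.1 ∧ q.1 < p.2) ∧ 0 < q.2 ∧ q.2 < g p.1} =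
          μ (({x : ℝ | q.2 < g x}) ×ˢ Set.Ioi q.1) := by
        intro μ
        congr 1
        ext p
        simp only [Set.mem_setOf_eq, Set.mem_prod, Set.mem_Ioi, h12.1, h12.2, true_and]
        tauto
      rw [hset r, hset rstar]
      have hAmeas : MeasurableSet {x : ℝ | q.2 < g x} :=
        (isOpen_lt continuous_const hgcont).measurableSet
      have hup : ∀ ⦃x y : ℝ⦄, x ∈ {x : ℝ | q.2 < g x} → x ≤ y → y ∈ {x : ℝ | q.2 < g x} :=
        fun x y hx hxy => lt_of_lt_of_le hx (hgmono hxy)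
      calc r ({x : ℝ | q.2 < g x} ×ˢ Set.Ioi q.1)
          ≤ min (Gm {x : ℝ | q.2 < g x}) (Fm (Set.Ioi q.1)) :=
            coupling_prod_le hr1 hr2 hAmeas measurableSet_Ioi
        _ ≤ rstar ({x : ℝ | q.2 < g x} ×ˢ Set.Ioi q.1) :=
            comonotone_prod_ge hrstar1 hrstar2 hS hmonoS hAmeas hup q.1
    · have hempty : {p : ℝ × ℝ | (0 < q.1 ∧ q.1 < p.2) ∧ 0 < q.2 ∧ q.2 < g p.1} = ∅ := by
        ext p
        simp only [Set.mem_setOf_eq, Set.mem_empty_iff_false, iff_false]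
        rintro ⟨⟨h1, -⟩, h2, -⟩
        exact h12 ⟨h1, h2⟩
      rw [hempty]
      simp
  -- finiteness of the rstar lintegral
  have hfin : (∫⁻ p, ENNReal.ofReal p.2 * ENNReal.ofReal (g p.1) ∂rstar) ≠ ⊤ := by
    have hae := haebound rstar hrstar2
    have hle : (∫⁻ p, ENNReal.ofReal p.2 * ENNReal.ofReal (g p.1) ∂rstar) ≤
        ∫⁻ _, ENNReal.ofReal xbar ∂rstar := by
      apply lintegral_mono_ae
      filter_upwards [hae] with p hp
      calc ENNReal.ofReal p.2 * ENNReal.ofReal (g p.1)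
          ≤ ENNReal.ofReal xbar * 1 := by
            apply mul_le_mul'
            · exact ENNReal.ofReal_le_ofReal hp.2
            · exact ENNReal.ofReal_le_one.2 (hgle1 _)
        _ = ENNReal.ofReal xbar := mul_one _
    refine ne_top_of_le_ne_top ?_ hle
    simp [lintegral_const]
  exact ENNReal.toReal_mono hfin hkey
end
end
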